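/- Let q be a prime power with residue characteristic p, and let Q ∈ F_q[x] be monic of degree 2g+1 with no repeated roots, where p > 2g+1. For 0 ≤ i ≤ 2g−1, let R_i, S_i ∈ F_q[x] with deg R_i ≤ 2g−1 and deg S_i ≤ 2g satisfy x^i = R_i(x)Q(x) + S_i(x)Q'(x). Then the derivatives S_0', S_1', …, S_{2g-1}' are linearly independent over F_q. -/
import Mathlib

open Polynomial

lemma natcast_ne_zero_of_lt_char (p : ℕ) (hp : p.Prime) (F : Type*) [Field F] [CharP F p]
    {n : ℕ} (hn : 0 < n) (h : n < p) : (n : F) ≠ 0 := by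
  rw [Ne, CharP.cast_eq_zero_iff F p]
  exact fun hd => absurd (Nat.le_of_dvd hn hd) (not_le.mpr h)

open Polynomial in
theorem stmt_7 (p : ℕ) (hp : p.Prime) (F : Type*) [Field F] [Fintype F] [CharP F p]
    (g : ℕ) (hg : 1 ≤ g) (hpg : 2 * g + 1 < p)
    (Q : F[X]) (hQmonic : Q.Monic) (hQdeg : Q.natDegree = 2 * g + 1) (hQsf : Squarefree Q)
    (R S : Fin (2 * g) → F[X])
    (hRdeg : ∀ i, (R i).natDegree ≤ 2 * g - 1) (hSdeg : ∀ i, (S i).natDegree ≤ 2 * g)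
    (hBezout : ∀ i : Fin (2 * g), X ^ (i : ℕ) = R i * Q + S i * Q.derivative) :
    LinearIndependent F (fun i : Fin (2 * g) => (S i).derivative) := by
  rw [Fintype.linearIndependent_iff]
  intro c hc
  set Sc : F[X] := ∑ i, c i • S i with hSc
  set Rc : F[X] := ∑ i, c i • R i with hRc
  set P : F[X] := ∑ i, c i • (X : F[X]) ^ (i : ℕ) with hP
  have hQ'deg : Q.derivative.natDegree ≤ 2 * g := by
    have := natDegree_derivative_le Q
    omega
  have hPeq : P = Rc * Q + Sc * Q.derivative := by
    rw [hP, hRc, hSc, Finset.sum_mul, Finset.sum_mul, ← Finset.sum_add_distrib]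
    exact Finset.sum_congr rfl fun i _ => by
      rw [hBezout i, smul_add, smul_mul_assoc, smul_mul_assoc]
  have hScder : Sc.derivative = 0 := by
    rw [hSc, map_sum]
    simpa using hc
  have hScdeg : Sc.natDegree ≤ 2 * g := by
    refine Polynomial.natDegree_sum_le_of_forall_le _ _ fun i _ => ?_
    exact le_trans (natDegree_smul_le _ _) (hSdeg i)
  have hSc0 : Sc.natDegree = 0 := by
    by_contra h
    have hd : 0 < Sc.natDegree := Nat.pos_of_ne_zero h
    have hne : Sc ≠ 0 := fun h0 => by simp [h0] at hd
    have hcd := coeff_derivative Sc (Sc.natDegree - 1)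
    rw [hScder, coeff_zero] at hcd
    have h1 : Sc.natDegree - 1 + 1 = Sc.natDegree := by omega
    rw [h1] at hcd
    have h2 : ((Sc.natDegree - 1 : ℕ) + 1 : F) = (Sc.natDegree : F) := by
      push_cast [h1]
      norm_num
      rw_mod_cast [h1]
    rw [h2] at hcd
    have h3 : (Sc.natDegree : F) ≠ 0 :=
      natcast_ne_zero_of_lt_char p hp F hd (by omega)
    have := Polynomial.leadingCoeff_ne_zero.mpr hne
    rw [Polynomial.leadingCoeff] at this
    rcases mul_eq_zero.mp hcd.symm with h4 | h4
    · exact this h4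
    · exact h3 h4
  have hPdeg : P.natDegree ≤ 2 * g - 1 := by
    refine Polynomial.natDegree_sum_le_of_forall_le _ _ fun i _ => ?_
    refine le_trans (natDegree_smul_le _ _) ?_
    rw [natDegree_X_pow]
    omega
  have hRc0 : Rc = 0 := by
    by_contra h
    have h1 : (Rc * Q).natDegree = Rc.natDegree + (2 * g + 1) := by
      rw [natDegree_mul h hQmonic.ne_zero, hQdeg]
    have h2 : Rc * Q = P - Sc * Q.derivative := by rw [hPeq]; ring
    have h3 : (P - Sc * Q.derivative).natDegree ≤ 2 * g := by
      refine le_trans (natDegree_sub_le _ _) (max_le (le_trans hPdeg (by omega)) ?_)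
      exact le_trans natDegree_mul_le (by omega)
    rw [← h2] at h3
    omega
  have hPSc : P = Sc * Q.derivative := by rw [hPeq, hRc0, zero_mul, zero_add]
  -- compare coefficient at 2g
  have hScc : Sc = C (Sc.coeff 0) := Polynomial.eq_C_of_natDegree_eq_zero hSc0
  have hPcoeff : P.coeff (2 * g) = 0 :=
    coeff_eq_zero_of_natDegree_lt (lt_of_le_of_lt hPdeg (by omega))
  have hQ'c : Q.derivative.coeff (2 * g) = (2 * g + 1 : ℕ) := by
    rw [coeff_derivative]
    have : Q.coeff (2 * g + 1) = 1 := by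
      have := hQmonic
      rw [Monic, leadingCoeff, hQdeg] at this
      exact this
    rw [this, one_mul]
    push_cast
    ring
  have hc0 : Sc.coeff 0 = 0 := by
    have := hPcoeff
    rw [hPSc, hScc, coeff_C_mul, hQ'c] at this
    have hne : ((2 * g + 1 : ℕ) : F) ≠ 0 :=
      natcast_ne_zero_of_lt_char p hp F (by omega) hpg
    exact (mul_eq_zero.mp this).resolve_right hne
  have hP0 : P = 0 := by rw [hPSc, hScc, hc0, map_zero, zero_mul]
  intro i
  have : P.coeff (i : ℕ) = c i := by
    rw [hP, finset_sum_coeff]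
    simp only [coeff_smul, coeff_X_pow, smul_eq_mul, mul_ite, mul_one, mul_zero]
    rw [Finset.sum_eq_single i]
    · simp
    · intro j _ hj
      rw [if_neg (fun h => hj (Fin.ext h.symm))]
    · intro h
      exact absurd (Finset.mem_univ i) h
  rw [hP0, coeff_zero] at this
  exact this.symm
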